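/- Let f : ℤ → ℝ be a function and let a ∈ ℤ. Let μ > 0 be non-integer with m − 1 < μ < m, where m = ⌈μ⌉. Then for all t ∈ ℤ with t ≥ a + m: | f(t) − Σ_{k=0}^{m−1} ((t−a)^{↑k}/k!) · ∇^k f(a) | ≤ ((t−a)^{↑μ}/Γ(μ+1)) · max_{τ ∈ {a+1,...,t}} |∇_{(a+1)*}^{μ} f(τ)|. -/

import Mathlib

open Finset

/-- Backward (nabla) difference: `∇f(t) = f(t) - f(t-1)`. -/
def nabla (f : ℤ → ℝ) : ℤ → ℝ := fun t => f t - f (t - 1)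

/-- Rising factorial `t^{↑α} = Γ(t+α)/Γ(t)`. -/
noncomputable def risingFac (t α : ℝ) : ℝ := Real.Gamma (t + α) / Real.Gamma t

/-- The `ν`-th order nabla fractional sum `∇_a^{-ν} f (t) = Σ_{s=a}^{t} (t-s+1)^{↑(ν-1)}/Γ(ν) · f(s)`. -/
noncomputable def fracSum (ν : ℝ) (a : ℤ) (f : ℤ → ℝ) : ℤ → ℝ := fun t =>
  ∑ s ∈ Finset.Icc a t, risingFac ((t - s + 1 : ℤ) : ℝ) (ν - 1) / Real.Gamma ν * f s

/-- Caputo-like nabla fractional difference `∇_{a*}^{μ} f = ∇_a^{-(m-μ)} (∇^m f)`, `m = ⌈μ⌉`. -/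
noncomputable def caputoNabla (μ : ℝ) (a : ℤ) (f : ℤ → ℝ) : ℤ → ℝ :=
  fracSum ((⌈μ⌉₊ : ℝ) - μ) a (nabla^[⌈μ⌉₊] f)

/-!
Write `H_ν(n) = ν (ν + 1) ⋯ (ν + n - 1) / n!` (`Ring.multichoose ν n`). The kernel of the nabla
fractional sum of order `ν` at distance `n = t - s` is `H_ν(n)`, and the Chu–Vandermonde identity
`H_{ν+σ} = H_ν ⋆ H_σ` makes fractional sums compose additively in the order. The Taylor formula of
integer order `m` identifies the remainder with the `m`-fold sum of `∇^m f`, which therefore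
equals the `μ`-fold sum of the `(m - μ)`-fold sum of `∇^m f`, i.e. of the Caputo difference.
The kernel `H_μ` is nonnegative with total mass `H_{μ+1}(t - a - 1) = (t - a)^{↑μ} / Γ(μ + 1)`
over `{a + 1, …, t}`, which gives the bound.
-/

theorem Ring.multichoose_add {R : Type*} [Ring R] [BinomialRing R] {r s : R} (n : ℕ)
    (h : Commute r s) :
    multichoose (r + s) n = ∑ ij ∈ antidiagonal n, multichoose r ij.1 * multichoose s ij.2 := by
  -- upper negation `choose (-r) n = (-1)^n • multichoose r n` reduces this to Chu–Vandermonde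
  have hneg := add_choose_eq n h.neg_left.neg_right
  rw [← neg_add, choose_neg'] at hneg
  rw [← smul_left_cancel_iff (Int.negOnePow n), hneg, smul_sum]
  refine sum_congr rfl fun ij hij => ?_
  rw [choose_neg', choose_neg', smul_mul_smul_comm, ← Int.negOnePow_add,
    ← Nat.cast_add, mem_antidiagonal.mp hij]

theorem Real.multichoose_eq_eval_div (x : ℝ) (n : ℕ) :
    Ring.multichoose x n = (ascPochhammer ℝ n).eval x / n.factorial := by
  rw [eq_div_iff (by positivity), mul_comm, ← nsmul_eq_mul,
    Ring.factorial_nsmul_multichoose_eq_ascPochhammer, Polynomial.ascPochhammer_smeval_eq_eval]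

theorem Real.multichoose_nonneg {x : ℝ} (hx : 0 ≤ x) (n : ℕ) : 0 ≤ Ring.multichoose x n := by
  rw [Real.multichoose_eq_eval_div]
  refine div_nonneg ?_ (by positivity)
  induction n with
  | zero => simp
  | succ n ih => rw [ascPochhammer_succ_eval]; positivity

theorem Real.Gamma_add_nat {x : ℝ} (hx : 0 < x) (n : ℕ) :
    Real.Gamma (x + n) = (ascPochhammer ℝ n).eval x * Real.Gamma x := by
  induction n with
  | zero => simp
  | succ n ih =>
    rw [Nat.cast_succ, ← add_assoc, Real.Gamma_add_one (by positivity), ih,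
      ascPochhammer_succ_eval]
    ring

theorem risingFac_natCast_add_one_div_Gamma (n : ℕ) {α : ℝ} (hα : -1 < α) :
    risingFac (n + 1) α / Real.Gamma (α + 1) = Ring.multichoose (α + 1) n := by
  have hpos : 0 < α + 1 := by linarith
  rw [risingFac, show (n : ℝ) + 1 + α = α + 1 + n by ring, Real.Gamma_add_nat hpos,
    Real.Gamma_nat_eq_factorial, Real.multichoose_eq_eval_div]
  field_simp [(Real.Gamma_pos_of_pos hpos).ne']

theorem Int.natCast_toNat_sub_add_one {R : Type*} [AddGroupWithOne R] {r t : ℤ} (h : r ≤ t) :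
    ((t - r).toNat : R) + 1 = ((t - r + 1 : ℤ) : R) := by
  rw [Int.cast_add, ← Int.cast_natCast, Int.toNat_of_nonneg (sub_nonneg.2 h), Int.cast_one]

theorem risingFac_intCast_sub_div_Gamma {a t : ℤ} (h : a < t) {α : ℝ} (hα : -1 < α) :
    risingFac ((t - a : ℤ) : ℝ) α / Real.Gamma (α + 1) =
      Ring.multichoose (α + 1) (t - (a + 1)).toNat := by
  rw [← risingFac_natCast_add_one_div_Gamma _ hα, Int.natCast_toNat_sub_add_one h,
    sub_add_eq_sub_sub, sub_add_cancel]

theorem Finset.sum_Icc_toNat_eq_sum_antidiagonal {M : Type*} [AddCommMonoid M] {r t : ℤ}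
    (h : r ≤ t) (F : ℕ → ℕ → M) :
    ∑ s ∈ Icc r t, F (t - s).toNat (s - r).toNat =
      ∑ ij ∈ antidiagonal (t - r).toNat, F ij.1 ij.2 := by
  refine sum_nbij' (fun s => ((t - s).toNat, (s - r).toNat)) (fun ij => r + ij.2) ?_ ?_ ?_ ?_ ?_
  all_goals intro x hx
  all_goals simp only [mem_Icc, HasAntidiagonal.mem_antidiagonal] at hx ⊢
  · omega
  · omega
  · omega
  · ext <;> dsimp only <;> omega

/-- `fracSum` with the kernel `multichoose ν (t - s)` in place of `(t - s + 1)^{↑(ν-1)} / Γ(ν)`.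
Only this form is meaningful at every real order: at `ν = 0` it is the identity, while
`fracSum 0` vanishes because `Γ 0 = 0` in Mathlib. -/
noncomputable def binomFracSum (ν : ℝ) (a : ℤ) (g : ℤ → ℝ) (t : ℤ) : ℝ :=
  ∑ s ∈ Icc a t, Ring.multichoose ν (t - s).toNat * g s

theorem fracSum_eq_binomFracSum {ν : ℝ} (hν : 0 < ν) (a : ℤ) (g : ℤ → ℝ) :
    fracSum ν a g = binomFracSum ν a g := by
  ext t
  refine sum_congr rfl fun s hs => ?_
  have h := risingFac_natCast_add_one_div_Gamma (t - s).toNat (α := ν - 1) (by linarith)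
  rw [Int.natCast_toNat_sub_add_one (mem_Icc.mp hs).2, sub_add_cancel] at h
  rw [h]

theorem binomFracSum_congr {ν : ℝ} {a t : ℤ} {g g' : ℤ → ℝ} (h : ∀ s ∈ Icc a t, g s = g' s) :
    binomFracSum ν a g t = binomFracSum ν a g' t :=
  sum_congr rfl fun s hs => by rw [h s hs]

theorem binomFracSum_sub (ν : ℝ) (a : ℤ) (g g' : ℤ → ℝ) (t : ℤ) :
    binomFracSum ν a (fun s => g s - g' s) t = binomFracSum ν a g t - binomFracSum ν a g' t := by
  simp only [binomFracSum, mul_sub, sum_sub_distrib]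

theorem sum_Icc_multichoose_mul_multichoose (ν σ : ℝ) {r t : ℤ} (h : r ≤ t) :
    ∑ s ∈ Icc r t, Ring.multichoose ν (t - s).toNat * Ring.multichoose σ (s - r).toNat =
      Ring.multichoose (ν + σ) (t - r).toNat := by
  rw [sum_Icc_toNat_eq_sum_antidiagonal h (fun i j => Ring.multichoose ν i * Ring.multichoose σ j),
    Ring.multichoose_add _ (Commute.all ν σ)]

theorem binomFracSum_binomFracSum (ν σ : ℝ) (a : ℤ) (g : ℤ → ℝ) (t : ℤ) :
    binomFracSum ν a (binomFracSum σ a g) t = binomFracSum (ν + σ) a g t := by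
  simp only [binomFracSum, mul_sum]
  rw [sum_comm' (t' := Icc a t) (s' := fun r => Icc r t) (fun s r => by
    simp only [mem_Icc]; omega)]
  refine sum_congr rfl fun r hr => ?_
  simp only [← mul_assoc, ← sum_mul]
  rw [sum_Icc_multichoose_mul_multichoose ν σ (mem_Icc.mp hr).2]

theorem binomFracSum_const (ν : ℝ) {a t : ℤ} (h : a ≤ t) (c : ℝ) :
    binomFracSum ν a (fun _ => c) t = Ring.multichoose (ν + 1) (t - a).toNat * c := by
  rw [binomFracSum, ← sum_mul, ← sum_Icc_multichoose_mul_multichoose ν 1 h]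
  simp only [Ring.multichoose_one, mul_one]

theorem binomFracSum_zero {a t : ℤ} (h : a ≤ t) (g : ℤ → ℝ) : binomFracSum 0 a g t = g t := by
  rw [binomFracSum, sum_eq_single_of_mem t (mem_Icc.mpr ⟨h, le_rfl⟩)]
  · simp
  · intro s hs hst
    obtain ⟨n, hn⟩ : ∃ n, (t - s).toNat = n + 1 :=
      ⟨(t - s).toNat - 1, by simp only [mem_Icc] at hs; omega⟩
    rw [hn, Ring.multichoose_zero_succ, zero_mul]

theorem sum_Icc_nabla {a t : ℤ} (h : a ≤ t) (g : ℤ → ℝ) :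
    ∑ s ∈ Icc (a + 1) t, nabla g s = g t - g a := by
  induction t, h using Int.leInduction with
  | base => simp
  | succ t ht ih =>
    rw [← insert_Icc_right_eq_Icc_add_one (by omega), sum_insert (by simp), ih, nabla,
      add_sub_cancel_right]
    ring

theorem binomFracSum_one_nabla {a t : ℤ} (h : a ≤ t) (g : ℤ → ℝ) :
    binomFracSum 1 (a + 1) (nabla g) t = g t - g a := by
  simp only [binomFracSum, Ring.multichoose_one, one_mul, sum_Icc_nabla h]

theorem sub_taylor_eq_binomFracSum (f : ℤ → ℝ) (m : ℕ) {a t : ℤ} (h : a < t) :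
    f t - ∑ k ∈ range m, Ring.multichoose ((k : ℝ) + 1) (t - (a + 1)).toNat * nabla^[k] f a =
      binomFracSum m (a + 1) (nabla^[m] f) t := by
  induction m with
  | zero => simp [binomFracSum_zero (show a + 1 ≤ t by omega)]
  | succ m ih =>
    symm
    calc binomFracSum ((m + 1 : ℕ) : ℝ) (a + 1) (nabla^[m + 1] f) t
        = binomFracSum m (a + 1) (binomFracSum 1 (a + 1) (nabla (nabla^[m] f))) t := by
          rw [binomFracSum_binomFracSum, Function.iterate_succ_apply', Nat.cast_succ]
      _ = binomFracSum m (a + 1) (fun s => nabla^[m] f s - nabla^[m] f a) t :=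
          binomFracSum_congr fun s hs => binomFracSum_one_nabla (by linarith [(mem_Icc.mp hs).1]) _
      _ = f t - ∑ k ∈ range (m + 1),
            Ring.multichoose ((k : ℝ) + 1) (t - (a + 1)).toNat * nabla^[k] f a := by
          rw [binomFracSum_sub, ← ih, binomFracSum_const _ (by omega), sum_range_succ]
          ring

theorem abs_binomFracSum_le {ν : ℝ} (hν : 0 ≤ ν) {a t : ℤ} (h : a ≤ t) {g : ℤ → ℝ} {M : ℝ}
    (hg : ∀ s ∈ Icc a t, |g s| ≤ M) :
    |binomFracSum ν a g t| ≤ Ring.multichoose (ν + 1) (t - a).toNat * M := by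
  rw [← binomFracSum_const ν h]
  refine (abs_sum_le_sum_abs _ _).trans (sum_le_sum fun s hs => ?_)
  rw [abs_mul, abs_of_nonneg (Real.multichoose_nonneg hν _)]
  exact mul_le_mul_of_nonneg_left (hg s hs) (Real.multichoose_nonneg hν _)

theorem discrete_nabla_fractional_taylor_remainder_bound_general
    (f : ℤ → ℝ) (a : ℤ) (μ : ℝ) (hμ : 0 < μ)
    (m : ℕ) (hm : m = ⌈μ⌉₊) (hm2 : μ < m)
    (t : ℤ) (ht : a + m ≤ t) :
    |f t - ∑ k ∈ Finset.range m,
        risingFac ((t - a : ℤ) : ℝ) k / (Nat.factorial k) * nabla^[k] f a| ≤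
      risingFac ((t - a : ℤ) : ℝ) μ / Real.Gamma (μ + 1) *
        sSup ((fun τ : ℤ => |caputoNabla μ (a + 1) f τ|) '' Set.Icc (a + 1) t) := by
  have hat : a < t := by
    have : 0 < m := by exact_mod_cast hμ.trans hm2
    omega
  have hremainder : f t - ∑ k ∈ range m,
      risingFac ((t - a : ℤ) : ℝ) k / (Nat.factorial k) * nabla^[k] f a =
        binomFracSum μ (a + 1) (caputoNabla μ (a + 1) f) t := by
    have hcoef (k : ℕ) : risingFac ((t - a : ℤ) : ℝ) k / (Nat.factorial k) =
        Ring.multichoose ((k : ℝ) + 1) (t - (a + 1)).toNat := by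
      rw [← Real.Gamma_nat_eq_factorial,
        risingFac_intCast_sub_div_Gamma hat (by linarith [k.cast_nonneg' (α := ℝ)])]
    simp only [hcoef]
    rw [sub_taylor_eq_binomFracSum f m hat, caputoNabla, ← hm,
      fracSum_eq_binomFracSum (sub_pos.mpr hm2), binomFracSum_binomFracSum, add_sub_cancel]
  rw [hremainder, risingFac_intCast_sub_div_Gamma hat (by linarith)]
  refine abs_binomFracSum_le hμ.le hat fun s hs => ?_
  exact le_csSup ((Set.finite_Icc _ _).image _).bddAbove ⟨s, Set.mem_Icc.mpr (mem_Icc.mp hs), rfl⟩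

/-- Estimate of the remainder of the discrete backward fractional Taylor formula. -/
theorem discrete_nabla_fractional_taylor_remainder_bound
    (f : ℤ → ℝ) (a : ℤ) (μ : ℝ) (hμ : 0 < μ) (hμint : ∀ n : ℤ, μ ≠ n)
    (m : ℕ) (hm : m = ⌈μ⌉₊) (hm1 : (m : ℝ) - 1 < μ) (hm2 : μ < m)
    (t : ℤ) (ht : a + m ≤ t) :
    |f t - ∑ k ∈ Finset.range m,
        risingFac ((t - a : ℤ) : ℝ) k / (Nat.factorial k) * nabla^[k] f a| ≤
      risingFac ((t - a : ℤ) : ℝ) μ / Real.Gamma (μ + 1) *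
        sSup ((fun τ : ℤ => |caputoNabla μ (a + 1) f τ|) '' Set.Icc (a + 1) t) :=
  discrete_nabla_fractional_taylor_remainder_bound_general f a μ hμ m hm hm2 t ht
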